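/- For every integer n ≥ 3, every j ∈ {0, 1, …, 2n−1}, and every t ∈ ℝ, the following exact identity holds between the quadrature weights: W_j^{(n)}(t) − R_j^{(n)}(t) sin²(t−ζ_j^{(n)}) = (π/(2n²)) sin(n(t−ζ_j^{(n)})) sin(2(t−ζ_j^{(n)})) + (π/(n²−n)) sin(n(t−ζ_j^{(n)})) sin(t−ζ_j^{(n)}) − (π/(n(n−1)(n+1))) cos((n−1)(t−ζ_j^{(n)})) − (π/(n(n−2)(n+2))) cos(n(t−ζ_j^{(n)})). -/

import Mathlib

/-- The collocation points ζ_j^{(n)} = πj/n. -/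
noncomputable def zetaPt (n j : ℕ) : ℝ := Real.pi * j / n

/-- The quadrature weight R_j^{(n)}(t). -/
noncomputable def Rweight (n j : ℕ) (t : ℝ) : ℝ :=
  -(2 * Real.pi / (n : ℝ)) *
      ∑ m ∈ Finset.Icc 1 (n - 1), (1 / (m : ℝ)) * Real.cos ((m : ℝ) * (t - zetaPt n j))
    - (Real.pi / (n : ℝ) ^ 2) * Real.cos ((n : ℝ) * (t - zetaPt n j))

/-- The quadrature weight W_j^{(n)}(t). -/
noncomputable def Wweight (n j : ℕ) (t : ℝ) : ℝ :=
  (Real.pi / (n : ℝ)) *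
      (1 / 4 + (2 / 3) * Real.cos (t - zetaPt n j) + (1 / 8) * Real.cos (2 * (t - zetaPt n j)))
    + (1 / 2) * Rweight n j t
    + (Real.pi / (n : ℝ)) *
        ∑ m ∈ Finset.Icc 3 (n - 1),
          ((m : ℝ) / ((m : ℝ) ^ 2 - 4)) * Real.cos ((m : ℝ) * (t - zetaPt n j))
    + (Real.pi / (2 * ((n : ℝ) ^ 2 - 4))) * Real.cos ((n : ℝ) * (t - zetaPt n j))

open Real Finset in
private lemma key (k : ℕ) (x : ℝ) :
    ∑ m ∈ Finset.Icc 3 (k + 2), ((m : ℝ) / ((m : ℝ) ^ 2 - 4)) * Real.cos ((m : ℝ) * x)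
      - Real.cos (2 * x) * ∑ m ∈ Finset.Icc 1 (k + 2), (1 / (m : ℝ)) * Real.cos ((m : ℝ) * x)
    = -1 / (2 * ((k : ℝ) + 1)) * Real.cos (((k : ℝ) + 3) * x)
      - 1 / (2 * ((k : ℝ) + 2)) * Real.cos (((k : ℝ) + 4) * x)
      + 1 / (2 * ((k : ℝ) + 3)) * Real.cos (((k : ℝ) + 1) * x)
      + 1 / (2 * ((k : ℝ) + 4)) * Real.cos (((k : ℝ) + 2) * x)
      - 1 / 4 - 2 / 3 * Real.cos x - 1 / 8 * Real.cos (2 * x) := by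
  induction k with
  | zero =>
    have h1 : Finset.Icc 3 2 = (∅ : Finset ℕ) := by decide
    have h2 : Finset.Icc 1 2 = ({1, 2} : Finset ℕ) := by decide
    rw [h1, h2]
    have e3 : Real.cos (((0:ℕ) + (3:ℝ)) * x) = Real.cos (2*x) * Real.cos x - Real.sin (2*x) * Real.sin x := by
      rw [show ((0:ℕ) + (3:ℝ)) * x = 2*x + x by push_cast; ring, Real.cos_add]
    have e4 : Real.cos (((0:ℕ) + (4:ℝ)) * x) = Real.cos (2*x) * Real.cos (2*x) - Real.sin (2*x) * Real.sin (2*x) := by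
      rw [show ((0:ℕ) + (4:ℝ)) * x = 2*x + 2*x by push_cast; ring, Real.cos_add]
    have hc : Real.cos (2*x) * Real.cos x + Real.sin (2*x) * Real.sin x = Real.cos x := by
      rw [← Real.cos_sub, show 2*x - x = x by ring]
    have hp := Real.sin_sq_add_cos_sq (2*x)
    simp only [Finset.sum_insert, Finset.mem_singleton, Finset.sum_singleton, Finset.sum_empty]
    push_cast
    push_cast at e3 e4
    norm_num at e3 e4 ⊢
    linear_combination (1/2)*e3 + (1/4)*e4 - (1/2)*hc - (1/4)*hp
  | succ k ih =>
    have hs1 : k + 1 + 2 = (k + 2) + 1 := rfl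
    rw [hs1, Finset.sum_Icc_succ_top (by omega : 3 ≤ k + 2 + 1),
      Finset.sum_Icc_succ_top (by omega : 1 ≤ k + 2 + 1)]
    have e1 : Real.cos (((k:ℝ)+5)*x)
        = Real.cos (((k:ℝ)+3)*x)*Real.cos (2*x) - Real.sin (((k:ℝ)+3)*x)*Real.sin (2*x) := by
      rw [show ((k:ℝ)+5)*x = ((k:ℝ)+3)*x + 2*x by ring, Real.cos_add]
    have e2 : Real.cos (((k:ℝ)+1)*x)
        = Real.cos (((k:ℝ)+3)*x)*Real.cos (2*x) + Real.sin (((k:ℝ)+3)*x)*Real.sin (2*x) := by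
      rw [show ((k:ℝ)+1)*x = ((k:ℝ)+3)*x - 2*x by ring, Real.cos_sub]
    have h1 : ((k:ℝ)+1) ≠ 0 := by positivity
    have h2 : ((k:ℝ)+2) ≠ 0 := by positivity
    have h3 : ((k:ℝ)+3) ≠ 0 := by positivity
    have h4 : ((k:ℝ)+4) ≠ 0 := by positivity
    have h5 : ((k:ℝ)+5) ≠ 0 := by positivity
    have h6 : ((k:ℝ)+3)^2 - 4 ≠ 0 := by
      have : ((k:ℝ)+3)^2 - 4 = ((k:ℝ)+1)*((k:ℝ)+5) := by ring
      rw [this]; positivity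
    push_cast
    rw [show ((k:ℝ)+2+1) = (k:ℝ)+3 by ring, show ((k:ℝ)+1+3) = (k:ℝ)+4 by ring,
      show ((k:ℝ)+1+4) = (k:ℝ)+5 by ring, show ((k:ℝ)+1+1) = (k:ℝ)+2 by ring,
      show ((k:ℝ)+1+2) = (k:ℝ)+3 by ring]
    have hq : ((k:ℝ)+3)/(((k:ℝ)+3)^2-4) = 1/(2*((k:ℝ)+1)) + 1/(2*((k:ℝ)+5)) := by
      rw [show ((k:ℝ)+3)^2-4 = ((k:ℝ)+1)*((k:ℝ)+5) by ring]
      field_simp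
      ring
    have hq3 : 1/((k:ℝ)+3) = 1/(2*((k:ℝ)+3)) + 1/(2*((k:ℝ)+3)) := by
      field_simp
      norm_num
    linear_combination ih + 1/(2*((k:ℝ)+3))*e1 + 1/(2*((k:ℝ)+3))*e2
      + Real.cos (((k:ℝ)+3)*x) * hq
      - Real.cos (((k:ℝ)+3)*x) * Real.cos (2*x) * hq3

set_option maxHeartbeats 2000000 in
lemma alg (P c A A1 A2 A3 B u v C2 D2 S1 S2 : ℝ)
    (hc0 : c ≠ 0) (hc1 : c - 1 ≠ 0) (hc2 : c - 2 ≠ 0) (hc3 : c + 1 ≠ 0) (hc4 : c + 2 ≠ 0)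
    (hK : S2 - C2 * S1 = -1/(2*(c-2))*A - 1/(2*(c-1))*A1 + 1/(2*c)*A3 + 1/(2*(c+1))*A2
      - 1/4 - 2/3*u - 1/8*C2)
    (e1 : A1 = A*u - B*v) (e2 : A2 = A*u + B*v) (e3 : A3 = A*C2 + B*D2)
    (hcos2 : C2 = 1 - 2*v^2) :
    P/c*(1/4 + 2/3*u + 1/8*C2) + 1/2*(-(2*P/c)*S1 - P/c^2*A) + P/c*S2
      + P/(2*(c^2-4))*A - (-(2*P/c)*S1 - P/c^2*A)*v^2
    = P/(2*c^2)*B*D2 + P/(c^2-c)*B*v - P/(c*(c-1)*(c+1))*A2 - P/(c*(c-2)*(c+2))*A := by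
  have hS2 : S2 = C2*S1 + (-1/(2*(c-2))*A - 1/(2*(c-1))*A1 + 1/(2*c)*A3 + 1/(2*(c+1))*A2
      - 1/4 - 2/3*u - 1/8*C2) := by linarith
  subst hS2 e1 e2 e3 hcos2
  have d1 : c^2 - 4 = (c-2)*(c+2) := by ring
  have d2 : c^2 - c = c*(c-1) := by ring
  rw [d1, d2]
  field_simp
  ring

set_option maxHeartbeats 1000000 in
theorem stmt12 (n : ℕ) (hn : 3 ≤ n) (j : ℕ) (hj : j < 2 * n) (t : ℝ) :
    Wweight n j t - Rweight n j t * Real.sin (t - zetaPt n j) ^ 2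
      = (Real.pi / (2 * (n : ℝ) ^ 2)) * Real.sin ((n : ℝ) * (t - zetaPt n j)) *
          Real.sin (2 * (t - zetaPt n j))
        + (Real.pi / ((n : ℝ) ^ 2 - (n : ℝ))) * Real.sin ((n : ℝ) * (t - zetaPt n j)) *
            Real.sin (t - zetaPt n j)
        - (Real.pi / ((n : ℝ) * ((n : ℝ) - 1) * ((n : ℝ) + 1))) *
            Real.cos (((n : ℝ) - 1) * (t - zetaPt n j))
        - (Real.pi / ((n : ℝ) * ((n : ℝ) - 2) * ((n : ℝ) + 2))) *
            Real.cos ((n : ℝ) * (t - zetaPt n j)) := by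
  obtain ⟨k, rfl⟩ : ∃ k, n = k + 3 := ⟨n - 3, by omega⟩
  rw [Wweight, Rweight]
  set x : ℝ := t - zetaPt (k + 3) j with hx
  have hk1 : k + 3 - 1 = k + 2 := rfl
  rw [hk1]
  push_cast
  rw [show ((k:ℝ)+3-1) = (k:ℝ)+2 by ring]
  have hk0 : (0:ℝ) ≤ (k:ℝ) := Nat.cast_nonneg k
  have c := ((k:ℝ) + 3)
  have K := key k x
  have e1 : Real.cos (((k:ℝ)+4)*x)
      = Real.cos (((k:ℝ)+3)*x) * Real.cos x - Real.sin (((k:ℝ)+3)*x) * Real.sin x := by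
    rw [show ((k:ℝ)+4)*x = ((k:ℝ)+3)*x + x by ring, Real.cos_add]
  have e2 : Real.cos (((k:ℝ)+2)*x)
      = Real.cos (((k:ℝ)+3)*x) * Real.cos x + Real.sin (((k:ℝ)+3)*x) * Real.sin x := by
    rw [show ((k:ℝ)+2)*x = ((k:ℝ)+3)*x - x by ring, Real.cos_sub]
  have e3 : Real.cos (((k:ℝ)+1)*x)
      = Real.cos (((k:ℝ)+3)*x) * Real.cos (2*x) + Real.sin (((k:ℝ)+3)*x) * Real.sin (2*x) := by
    rw [show ((k:ℝ)+1)*x = ((k:ℝ)+3)*x - 2*x by ring, Real.cos_sub]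
  have hcos2 : Real.cos (2*x) = 1 - 2 * Real.sin x ^ 2 := by
    have h := Real.sin_sq_add_cos_sq x
    rw [Real.cos_two_mul' x]; linarith
  have hK : (∑ m ∈ Finset.Icc 3 (k + 2), ((m : ℝ) / ((m : ℝ) ^ 2 - 4)) * Real.cos ((m : ℝ) * x))
      - Real.cos (2*x) * ∑ m ∈ Finset.Icc 1 (k + 2), (1 / (m : ℝ)) * Real.cos ((m : ℝ) * x)
      = -1/(2*(((k:ℝ)+3)-2)) * Real.cos (((k:ℝ)+3)*x)
        - 1/(2*(((k:ℝ)+3)-1)) * Real.cos (((k:ℝ)+4)*x)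
        + 1/(2*((k:ℝ)+3)) * Real.cos (((k:ℝ)+1)*x)
        + 1/(2*(((k:ℝ)+3)+1)) * Real.cos (((k:ℝ)+2)*x)
        - 1/4 - 2/3 * Real.cos x - 1/8 * Real.cos (2*x) := by
    linear_combination K
  have H := alg Real.pi ((k:ℝ)+3) (Real.cos (((k:ℝ)+3)*x)) (Real.cos (((k:ℝ)+4)*x))
    (Real.cos (((k:ℝ)+2)*x)) (Real.cos (((k:ℝ)+1)*x)) (Real.sin (((k:ℝ)+3)*x))
    (Real.cos x) (Real.sin x) (Real.cos (2*x)) (Real.sin (2*x))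
    (∑ m ∈ Finset.Icc 1 (k + 2), (1 / (m : ℝ)) * Real.cos ((m : ℝ) * x))
    (∑ m ∈ Finset.Icc 3 (k + 2), ((m : ℝ) / ((m : ℝ) ^ 2 - 4)) * Real.cos ((m : ℝ) * x))
    (by positivity) (ne_of_gt (by nlinarith)) (ne_of_gt (by nlinarith))
    (by positivity) (by positivity) hK e1 e2 e3 hcos2
  linear_combination H
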